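/- The null space of the propagation Hamiltonian consists exactly of the history vectors: for v indexed by Fin N × Fin (T+1), H_prop.mulVec v = 0 if and only if there exists α ∈ ℂ^N with v = η_α = Σ_{t=0}^T (U_t ⋯ U_1 α) ⊗ e_t. -/

import Mathlib

open Matrix Kronecker BigOperators

variable {N T : ℕ}

namespace Stmt8Aux

/-- the `s`-th time slice of a computation-clock vector -/
noncomputable def tcol (v : Fin N × Fin (T + 1) → ℂ) (s : Fin (T + 1)) : Fin N → ℂ :=
  fun i => v (i, s)

noncomputable def Eij' (s t : Fin (T + 1)) : Matrix (Fin (T + 1)) (Fin (T + 1)) ℂ :=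
  Matrix.single s t 1

lemma kron_Eij_mulVec (A : Matrix (Fin N) (Fin N) ℂ) (a b : Fin (T + 1))
    (v : Fin N × Fin (T + 1) → ℂ) (i : Fin N) (s : Fin (T + 1)) :
    ((A ⊗ₖ Eij' a b).mulVec v) (i, s) = if s = a then (A.mulVec (tcol v b)) i else 0 := by
  simp only [Matrix.mulVec, dotProduct, Fintype.sum_prod_type, kroneckerMap_apply,
    Eij', Matrix.single, Matrix.of_apply, tcol]
  by_cases h : s = a
  · subst h
    simp only [true_and, ite_and, mul_ite, mul_one, mul_zero, ite_mul, zero_mul, if_pos rfl]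
    refine Finset.sum_congr rfl fun j _ => ?_
    rw [Finset.sum_ite_eq Finset.univ b (fun u => A i j * v (j, u)) ]
    simp
  · rw [if_neg h]
    apply Finset.sum_eq_zero; intro j _
    apply Finset.sum_eq_zero; intro u _
    rw [if_neg (by exact fun hc => h hc.1.symm)]
    ring

lemma sum_mulVec {m : Type*} [Fintype m] {ι : Type*} (s : Finset ι)
    (f : ι → Matrix m m ℂ) (v : m → ℂ) :
    (∑ t ∈ s, f t).mulVec v = ∑ t ∈ s, (f t).mulVec v := by
  ext x
  simp only [Matrix.mulVec, dotProduct, Finset.sum_apply, Matrix.sum_apply,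
    Finset.sum_mul]
  rw [Finset.sum_comm]

end Stmt8Aux

/-- `prodU U t = U_t ⋯ U_1` (with `U_k := U ⟨k-1⟩`); for `t = 0` it is the identity. -/
noncomputable def prodU (U : Fin T → Matrix (Fin N) (Fin N) ℂ) : ℕ → Matrix (Fin N) (Fin N) ℂ
  | 0 => 1
  | s + 1 => (if h : s < T then U ⟨s, h⟩ else 1) * prodU U s

/-- The matrix `E_{s,t}` with a single `1` in entry `(s,t)`. -/
noncomputable def Eij (s t : Fin (T + 1)) : Matrix (Fin (T + 1)) (Fin (T + 1)) ℂ :=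
  Matrix.single s t 1

/-- The `t`-th standard basis vector `e_t` of `ℂ^{T+1}`. -/
noncomputable def eVec (t : Fin (T + 1)) : Fin (T + 1) → ℂ := fun s => if s = t then 1 else 0

/-- Kronecker product of a vector in `ℂ^N` with a vector in `ℂ^{T+1}`. -/
noncomputable def vecKron (x : Fin N → ℂ) (y : Fin (T + 1) → ℂ) : Fin N × Fin (T + 1) → ℂ :=
  fun p => x p.1 * y p.2

/-- The history vector `η_α = ∑_{t=0}^T (U_t ⋯ U_1 α) ⊗ e_t`. -/
noncomputable def historyVec (U : Fin T → Matrix (Fin N) (Fin N) ℂ) (α : Fin N → ℂ) :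
    Fin N × Fin (T + 1) → ℂ :=
  ∑ t : Fin (T + 1), vecKron ((prodU U (t : ℕ)).mulVec α) (eVec t)

/-- The propagation Hamiltonian term `H_prop(t)` verifying the step from time `t-1`
to time `t` (here `t ∈ {1, …, T}` is encoded by `t : Fin T`, via `t.castSucc ↦ t.succ`). -/
noncomputable def HpropT (U : Fin T → Matrix (Fin N) (Fin N) ℂ) (t : Fin T) :
    Matrix (Fin N × Fin (T + 1)) (Fin N × Fin (T + 1)) ℂ :=
  (1 / 2 : ℂ) •
    ((1 : Matrix (Fin N) (Fin N) ℂ) ⊗ₖ (Eij t.succ t.succ + Eij t.castSucc t.castSucc)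
      - (U t) ⊗ₖ Eij t.succ t.castSucc - (U t)ᴴ ⊗ₖ Eij t.castSucc t.succ)

/-- The full propagation Hamiltonian `H_prop = ∑_{t=1}^T H_prop(t)`. -/
noncomputable def Hprop (U : Fin T → Matrix (Fin N) (Fin N) ℂ) :
    Matrix (Fin N × Fin (T + 1)) (Fin N × Fin (T + 1)) ℂ :=
  ∑ t : Fin T, HpropT U t

namespace Stmt8Aux

lemma Eij_eq (a b : Fin (T+1)) : Eij a b = Eij' a b := rfl

lemma HpropT_mulVec (U : Fin T → Matrix (Fin N) (Fin N) ℂ) (t : Fin T)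
    (v : Fin N × Fin (T + 1) → ℂ) (i : Fin N) (s : Fin (T + 1)) :
    ((HpropT U t).mulVec v) (i, s) =
      (1/2 : ℂ) *
        ((if s = t.succ then tcol v t.succ i - ((U t).mulVec (tcol v t.castSucc)) i else 0)
        + (if s = t.castSucc then tcol v t.castSucc i - (((U t)ᴴ).mulVec (tcol v t.succ)) i
            else 0)) := by
  have hne : (t.succ : Fin (T+1)) ≠ t.castSucc := by
    simp [Fin.ext_iff]
  simp only [HpropT, Eij_eq, Matrix.kronecker_add, Matrix.smul_mulVec,
    Matrix.sub_mulVec, Matrix.add_mulVec, Pi.smul_apply, Pi.sub_apply, Pi.add_apply,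
    kron_Eij_mulVec, Matrix.one_mulVec, smul_eq_mul]
  by_cases h1 : s = t.succ <;> by_cases h2 : s = t.castSucc
  · exact absurd (h1 ▸ h2) hne
  · subst h1; simp only [if_pos rfl, if_neg h2, ite_true, eq_self_iff_true, tcol]; ring
  · subst h2; simp only [if_pos rfl, if_neg h1, ite_true, eq_self_iff_true, tcol]; ring
  · simp [if_neg h1, if_neg h2]

lemma Hprop_mulVec (U : Fin T → Matrix (Fin N) (Fin N) ℂ)
    (v : Fin N × Fin (T + 1) → ℂ) (i : Fin N) (s : Fin (T + 1)) :
    ((Hprop U).mulVec v) (i, s) =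
      ∑ t : Fin T, (1/2 : ℂ) *
        ((if s = t.succ then tcol v t.succ i - ((U t).mulVec (tcol v t.castSucc)) i else 0)
        + (if s = t.castSucc then tcol v t.castSucc i - (((U t)ᴴ).mulVec (tcol v t.succ)) i
            else 0)) := by
  rw [Hprop, sum_mulVec]
  rw [Finset.sum_apply]
  exact Finset.sum_congr rfl fun t _ => HpropT_mulVec U t v i s

lemma sum_ite_succ_eq (f : Fin T → ℂ) (k : ℕ) (hk : k < T) (hs : k + 1 < T + 1) :
    (∑ t : Fin T, if (⟨k+1, hs⟩ : Fin (T+1)) = t.succ then f t else 0) = f ⟨k, hk⟩ := by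
  rw [Finset.sum_eq_single (⟨k, hk⟩ : Fin T)]
  · simp [Fin.ext_iff]
  · intro t _ ht
    rw [if_neg]
    intro hc
    exact ht (Fin.ext (by simpa [Fin.ext_iff] using hc.symm))
  · simp

lemma sum_ite_castSucc_eq (f : Fin T → ℂ) (k : ℕ) (hk : k < T) (hs : k < T + 1) :
    (∑ t : Fin T, if (⟨k, hs⟩ : Fin (T+1)) = t.castSucc then f t else 0) = f ⟨k, hk⟩ := by
  rw [Finset.sum_eq_single (⟨k, hk⟩ : Fin T)]
  · simp [Fin.ext_iff]
  · intro t _ ht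
    rw [if_neg]
    intro hc
    exact ht (Fin.ext (by simpa [Fin.ext_iff] using hc.symm))
  · simp

lemma sum_ite_succ_zero (f : Fin T → ℂ) (hs : 0 < T + 1) :
    (∑ t : Fin T, if (⟨0, hs⟩ : Fin (T+1)) = t.succ then f t else 0) = 0 := by
  apply Finset.sum_eq_zero
  intro t _
  rw [if_neg]
  simp [Fin.ext_iff]

lemma sum_ite_castSucc_last (f : Fin T → ℂ) (hs : T < T + 1) :
    (∑ t : Fin T, if (⟨T, hs⟩ : Fin (T+1)) = t.castSucc then f t else 0) = 0 := by
  apply Finset.sum_eq_zero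
  intro t _
  rw [if_neg]
  simp only [Fin.ext_iff, Fin.coe_castSucc]
  omega

lemma historyVec_apply (U : Fin T → Matrix (Fin N) (Fin N) ℂ) (α : Fin N → ℂ)
    (i : Fin N) (s : Fin (T + 1)) :
    historyVec U α (i, s) = ((prodU U (s : ℕ)).mulVec α) i := by
  simp only [historyVec, vecKron, eVec, Finset.sum_apply, mul_ite, mul_one, mul_zero]
  rw [Finset.sum_ite_eq Finset.univ s (fun t => ((prodU U (t : ℕ)).mulVec α) i)]
  simp

end Stmt8Aux

set_option maxHeartbeats 1600000 in
open Stmt8Aux in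
/-- The null space of the propagation Hamiltonian consists exactly of the history
vectors: `H_prop v = 0` iff `v = η_α` for some `α ∈ ℂ^N`. -/
theorem stmt_8 {N T : ℕ} (hN : 1 ≤ N) (hT : 1 ≤ T)
    (U : Fin T → Matrix (Fin N) (Fin N) ℂ)
    (hU : ∀ t, (U t)ᴴ * U t = 1 ∧ U t * (U t)ᴴ = 1)
    (v : Fin N × Fin (T + 1) → ℂ) :
    (Hprop U).mulVec v = 0 ↔ ∃ α : Fin N → ℂ, v = historyVec U α := by
  constructor
  · intro h
    -- step conditions by induction
    have step : ∀ k (hk : k < T),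
        tcol v ⟨k+1, by omega⟩ = (U ⟨k, hk⟩).mulVec (tcol v ⟨k, by omega⟩) := by
      intro k
      induction k with
      | zero =>
        intro hk
        have key : tcol v ⟨0, by omega⟩ =
            ((U ⟨0, hk⟩)ᴴ).mulVec (tcol v ⟨1, by omega⟩) := by
          funext i
          have h0 : ((Hprop U).mulVec v) (i, ⟨0, by omega⟩) = 0 := congrFun h _
          rw [Hprop_mulVec] at h0
          simp only [mul_add, Finset.sum_add_distrib, ← Finset.mul_sum] at h0
          rw [sum_ite_succ_zero, sum_ite_castSucc_eq _ 0 hk] at h0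
          have : tcol v ⟨0, by omega⟩ i -
              ((U ⟨0, hk⟩)ᴴ).mulVec (tcol v (Fin.succ ⟨0, hk⟩)) i = 0 := by
            have h2 : (2:ℂ) ≠ 0 := two_ne_zero
            field_simp at h0
            simpa using h0
          have hs : (Fin.succ (⟨0, hk⟩ : Fin T)) = (⟨1, by omega⟩ : Fin (T+1)) := rfl
          rw [hs] at this
          linear_combination this
        rw [key, Matrix.mulVec_mulVec, (hU ⟨0, hk⟩).2, Matrix.one_mulVec]
      | succ k ih =>
        intro hk
        have hk' : k < T := by omega
        have ihk := ih hk'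
        have key : tcol v ⟨k+1, by omega⟩ =
            ((U ⟨k+1, hk⟩)ᴴ).mulVec (tcol v ⟨k+2, by omega⟩) := by
          funext i
          have h0 : ((Hprop U).mulVec v) (i, ⟨k+1, by omega⟩) = 0 := congrFun h _
          rw [Hprop_mulVec] at h0
          simp only [mul_add, Finset.sum_add_distrib, ← Finset.mul_sum] at h0
          rw [sum_ite_succ_eq _ k hk', sum_ite_castSucc_eq _ (k+1) hk] at h0
          -- identify Fin values
          have e1 : (Fin.succ (⟨k, hk'⟩ : Fin T)) = (⟨k+1, by omega⟩ : Fin (T+1)) := rfl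
          have e2 : (Fin.castSucc (⟨k, hk'⟩ : Fin T)) = (⟨k, by omega⟩ : Fin (T+1)) := rfl
          have e3 : (Fin.castSucc (⟨k+1, hk⟩ : Fin T)) = (⟨k+1, by omega⟩ : Fin (T+1)) := rfl
          have e4 : (Fin.succ (⟨k+1, hk⟩ : Fin T)) = (⟨k+2, by omega⟩ : Fin (T+1)) := rfl
          rw [e1, e2, e3, e4, ihk] at h0
          simp only [sub_self] at h0
          have h2 : (2:ℂ) ≠ 0 := two_ne_zero
          have := h0
          field_simp at this
          rw [ihk]
          linear_combination this
        rw [key, Matrix.mulVec_mulVec, (hU ⟨k+1, hk⟩).2, Matrix.one_mulVec]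
    -- propagate to prodU
    have colEq : ∀ k (hk : k < T + 1),
        tcol v ⟨k, hk⟩ = (prodU U k).mulVec (tcol v ⟨0, by omega⟩) := by
      intro k
      induction k with
      | zero => intro hk; simp [prodU, Matrix.one_mulVec]
      | succ k ih =>
        intro hk
        have hkT : k < T := by omega
        rw [step k hkT, ih (by omega)]
        show _ = (prodU U (k+1)).mulVec _
        rw [show prodU U (k+1) = (if h : k < T then U ⟨k, h⟩ else 1) * prodU U k from rfl,
          dif_pos hkT, ← Matrix.mulVec_mulVec]
    refine ⟨tcol v ⟨0, by omega⟩, ?_⟩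
    funext p
    obtain ⟨i, s⟩ := p
    rw [historyVec_apply]
    have := congrFun (colEq s.val s.isLt) i
    simpa [tcol] using this
  · rintro ⟨α, rfl⟩
    have colh : ∀ s : Fin (T+1), tcol (historyVec U α) s = (prodU U (s : ℕ)).mulVec α := by
      intro s; funext i; exact historyVec_apply U α i s
    have stepcol : ∀ t : Fin T,
        tcol (historyVec U α) t.succ = (U t).mulVec (tcol (historyVec U α) t.castSucc) := by
      intro t
      rw [colh, colh]
      have : ((t.succ : Fin (T+1)) : ℕ) = (t : ℕ) + 1 := rfl
      rw [this]
      rw [show prodU U ((t:ℕ)+1) = (if h : (t:ℕ) < T then U ⟨(t:ℕ), h⟩ else 1) * prodU U (t:ℕ)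
        from rfl, dif_pos t.isLt]
      rw [← Matrix.mulVec_mulVec, Fin.eta]
      have h2 : ((t.castSucc : Fin (T+1)) : ℕ) = (t : ℕ) := rfl
      rw [h2]
    funext p
    obtain ⟨i, s⟩ := p
    rw [Hprop_mulVec]
    show _ = (0 : ℂ)
    apply Finset.sum_eq_zero
    intro t _
    have ht1 : tcol (historyVec U α) t.succ i
        - ((U t).mulVec (tcol (historyVec U α) t.castSucc)) i = 0 := by
      rw [stepcol]; ring
    have ht2 : tcol (historyVec U α) t.castSucc i
        - (((U t)ᴴ).mulVec (tcol (historyVec U α) t.succ)) i = 0 := by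
      rw [stepcol, Matrix.mulVec_mulVec, (hU t).1, Matrix.one_mulVec]; ring
    rw [mul_eq_zero]
    right
    split_ifs <;> simp [ht1, ht2]
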